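/- In a flow network with integer capacities, there exists a maximum flow that is integer-valued on every arc (integrality theorem), and hence the maximum flow value is an integer. -/

import Mathlib

open Finset

variable {V : Type*}

/-- Value of a flow `x` at node `s`: net flow out of `s`. -/
def flowValueFrom [DecidableEq V] (E : Finset (V × V)) (x : V × V → ℝ) (s : V) : ℝ :=
  ∑ e ∈ E.filter (fun e => e.1 = s), x e - ∑ e ∈ E.filter (fun e => e.2 = s), x e

/-- Feasible (s,t)-flow: capacity constraints, zero outside `E`, conservation away from s,t. -/
def IsFeasibleFlow [DecidableEq V] (E : Finset (V × V)) (u x : V × V → ℝ) (s t : V) : Prop :=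
  (∀ e ∈ E, 0 ≤ x e ∧ x e ≤ u e) ∧
  (∀ e, e ∉ E → x e = 0) ∧
  (∀ v : V, v ≠ s → v ≠ t →
    ∑ e ∈ E.filter (fun e => e.2 = v), x e = ∑ e ∈ E.filter (fun e => e.1 = v), x e)

/-- Arcs leaving the node set `S`. -/
def cutArcs [DecidableEq V] (E : Finset (V × V)) (S : Finset V) : Finset (V × V) :=
  E.filter (fun e => e.1 ∈ S ∧ e.2 ∉ S)

/-- Arcs entering the node set `S`. -/
def backArcs [DecidableEq V] (E : Finset (V × V)) (S : Finset V) : Finset (V × V) :=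
  E.filter (fun e => e.1 ∉ S ∧ e.2 ∈ S)

/-- Capacity of the cut induced by `S`. -/
def cutCapacity [DecidableEq V] (E : Finset (V × V)) (u : V × V → ℝ) (S : Finset V) : ℝ :=
  ∑ e ∈ cutArcs E S, u e

section IntegralityAux

set_option linter.unusedSectionVars false

variable [DecidableEq V]

/-- Net outflow of an integer flow at a node. -/
def netout (E : Finset (V × V)) (x : V × V → ℤ) (v : V) : ℤ :=
  ∑ e ∈ E.filter (fun e => e.1 = v), x e - ∑ e ∈ E.filter (fun e => e.2 = v), x e

lemma netout_update (E : Finset (V × V)) (x : V × V → ℤ) (e₀ : V × V) (he : e₀ ∈ E) (c : ℤ)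
    (v : V) :
    netout E (fun e => if e = e₀ then x e + c else x e) v
      = netout E x v + (if v = e₀.1 then c else 0) - (if v = e₀.2 then c else 0) := by
  unfold netout
  have key : ∀ F : Finset (V × V), ∑ e ∈ F, (if e = e₀ then x e + c else x e)
      = ∑ e ∈ F, x e + (if e₀ ∈ F then c else 0) := by
    intro F
    have h : ∀ e, (if e = e₀ then x e + c else x e) = x e + (if e = e₀ then c else 0) := by
      intro e; split_ifs <;> simp
    simp_rw [h, Finset.sum_add_distrib]
    congr 1
    exact Finset.sum_ite_eq' F e₀ (fun _ => c)
  rw [key, key]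
  simp only [Finset.mem_filter, he, true_and]
  have e1 : (e₀.1 = v) ↔ (v = e₀.1) := eq_comm
  have e2 : (e₀.2 = v) ↔ (v = e₀.2) := eq_comm
  simp only [e1, e2]
  split_ifs <;> ring

/-- Residual relation of an integer flow. -/
def Res (E : Finset (V × V)) (u : V × V → ℕ) (x : V × V → ℤ) (a b : V) : Prop :=
  ((a, b) ∈ E ∧ x (a, b) < (u (a, b) : ℤ)) ∨ ((b, a) ∈ E ∧ 0 < x (b, a))

lemma getLast_eq_of_eq {α : Type*} {l₁ l₂ : List α} (h : l₁ = l₂) (h₁ : l₁ ≠ []) :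
    l₁.getLast h₁ = l₂.getLast (h ▸ h₁) := by subst h; rfl

lemma chain_congr {R S : V → V → Prop} : ∀ (l : List V) (b : V),
    (∀ c d, c ∈ b :: l → d ∈ l → R c d → S c d) → List.Chain R b l → List.Chain S b l := by
  intro l
  induction l with
  | nil => intro b _ _; exact List.Chain.nil
  | cons d l ih =>
    intro b h hc
    cases hc with
    | cons_cons hbd hdl =>
      refine List.Chain.cons (h b d (by simp) (by simp) hbd) ?_
      refine ih d (fun c e hc he hr => h c e ?_ (by simp [he]) hr) hdl
      rcases List.mem_cons.mp hc with h1 | h1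
      · simp [h1]
      · simp [h1]

lemma augment (E : Finset (V × V)) (u : V × V → ℕ) (t : V) :
    ∀ (n : ℕ) (l : List V) (a : V) (x : V × V → ℤ), l.length ≤ n →
    List.Chain (Res E u x) a l → (a :: l).getLast (by simp) = t →
    (∀ e ∈ E, 0 ≤ x e ∧ x e ≤ (u e : ℤ)) →
    ∃ x' : V × V → ℤ,
      (∀ e ∈ E, 0 ≤ x' e ∧ x' e ≤ (u e : ℤ)) ∧
      (∀ e, e ∉ E → x' e = x e) ∧
      (∀ v, netout E x' v
          = netout E x v + (if v = a then 1 else 0) - (if v = t then 1 else 0)) := by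
  intro n
  induction n with
  | zero =>
    intro l a x hlen _ hlast hcap
    have hl : l = [] := List.length_eq_zero_iff.mp (Nat.le_zero.mp hlen)
    subst hl
    simp only [List.getLast_singleton] at hlast
    subst hlast
    exact ⟨x, hcap, fun _ _ => rfl, fun v => by split_ifs <;> ring⟩
  | succ n ih =>
    intro l a x hlen hchain hlast hcap
    match l with
    | [] =>
      simp only [List.getLast_singleton] at hlast
      subst hlast
      exact ⟨x, hcap, fun _ _ => rfl, fun v => by split_ifs <;> ring⟩
    | b :: l' =>
      by_cases hmem : a ∈ b :: l'
      · obtain ⟨l₁, l₂, hdecomp⟩ := List.append_of_mem hmem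
        have hchain2 : List.Chain (Res E u x) a l₂ := by
          rw [hdecomp] at hchain
          exact (List.isChain_cons_split.mp hchain).2
        have hd : (a :: b :: l') = (a :: l₁) ++ (a :: l₂) := by simp [hdecomp]
        have hlast2 : (a :: l₂).getLast (by simp) = t := by
          rw [← List.getLast_append_of_ne_nil (l := a :: l₁) (l' := a :: l₂) (by simp) (by simp)]
          exact (getLast_eq_of_eq hd (by simp)).symm.trans hlast
        have hlen2 : l₂.length ≤ n := by
          have hL : l'.length + 1 = l₁.length + (l₂.length + 1) := by
            simpa using congrArg List.length hdecomp
          simp only [List.length_cons] at hlen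
          omega
        exact ih l₂ a x hlen2 hchain2 hlast2 hcap
      · have hab : Res E u x a b := (List.chain_cons.mp hchain).1
        have hchainb : List.Chain (Res E u x) b l' := (List.chain_cons.mp hchain).2
        have hlastb : (b :: l').getLast (by simp) = t := by
          rw [List.getLast_cons (by simp)] at hlast
          exact hlast
        have hane : ∀ v ∈ b :: l', v ≠ a := fun v hv h => hmem (h ▸ hv)
        have step : ∃ x₁ : V × V → ℤ,
            (∀ e ∈ E, 0 ≤ x₁ e ∧ x₁ e ≤ (u e : ℤ)) ∧
            (∀ e, e ∉ E → x₁ e = x e) ∧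
            (∀ v, netout E x₁ v
                = netout E x v + (if v = a then 1 else 0) - (if v = b then 1 else 0)) ∧
            (∀ e : V × V, e.1 ≠ a → e.2 ≠ a → x₁ e = x e) := by
          rcases hab with ⟨hE, hlt⟩ | ⟨hE, hpos⟩
          · refine ⟨fun e => if e = (a, b) then x e + 1 else x e, ?_, ?_, ?_, ?_⟩
            · intro e heE
              dsimp only
              by_cases h : e = (a, b)
              · subst h
                rw [if_pos rfl]
                have h0 := (hcap _ hE).1
                omega
              · rw [if_neg h]; exact hcap e heE
            · intro e he
              have hne : e ≠ (a, b) := by rintro rfl; exact he hE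
              dsimp only
              rw [if_neg hne]
            · intro v
              rw [netout_update E x (a, b) hE 1 v]
            · intro e h1 _
              have hne : e ≠ (a, b) := by rintro rfl; exact h1 rfl
              dsimp only
              rw [if_neg hne]
          · refine ⟨fun e => if e = (b, a) then x e - 1 else x e, ?_, ?_, ?_, ?_⟩
            · intro e heE
              dsimp only
              by_cases h : e = (b, a)
              · subst h
                rw [if_pos rfl]
                have h0 := (hcap _ hE).2
                omega
              · rw [if_neg h]; exact hcap e heE
            · intro e he
              have hne : e ≠ (b, a) := by rintro rfl; exact he hE
              dsimp only
              rw [if_neg hne]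
            · intro v
              have h := netout_update E x (b, a) hE (-1) v
              simp only [show ∀ e : V × V, x e - 1 = x e + (-1) from fun e => by ring] at h ⊢
              rw [h]
              split_ifs <;> ring
            · intro e _ h2
              have hne : e ≠ (b, a) := by rintro rfl; exact h2 rfl
              dsimp only
              rw [if_neg hne]
        obtain ⟨x₁, hcap₁, hsupp₁, hnet₁, hagree₁⟩ := step
        have hchain₁ : List.Chain (Res E u x₁) b l' := by
          refine chain_congr l' b (fun c d hc hd hr => ?_) hchainb
          have hca : c ≠ a := hane c hc
          have hda : d ≠ a := hane d (List.mem_cons_of_mem b hd)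
          have e1 : x₁ (c, d) = x (c, d) := hagree₁ (c, d) hca hda
          have e2 : x₁ (d, c) = x (d, c) := hagree₁ (d, c) hda hca
          unfold Res at hr ⊢
          rw [e1, e2]
          exact hr
        obtain ⟨x₂, hcap₂, hsupp₂, hnet₂⟩ :=
          ih l' b x₁ (by simp at hlen; omega) hchain₁ hlastb hcap₁
        refine ⟨x₂, hcap₂, ?_, ?_⟩
        · intro e he; rw [hsupp₂ e he, hsupp₁ e he]
        · intro v
          rw [hnet₂ v, hnet₁ v]
          split_ifs <;> ring

lemma sum_fiber_fst (E : Finset (V × V)) (S : Finset V) (y : V × V → ℝ) :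
    ∑ v ∈ S, ∑ e ∈ E.filter (fun e => e.1 = v), y e
      = ∑ e ∈ E.filter (fun e => e.1 ∈ S), y e := by
  rw [← Finset.sum_fiberwise_of_maps_to (g := Prod.fst) (t := S)
      (fun e he => (Finset.mem_filter.mp he).2) y]
  refine Finset.sum_congr rfl fun v hv => ?_
  refine Finset.sum_congr ?_ fun _ _ => rfl
  rw [Finset.filter_filter]
  refine Finset.filter_congr fun e _ => ?_
  constructor
  · exact fun h => ⟨h ▸ hv, h⟩
  · exact fun h => h.2

lemma sum_fiber_snd (E : Finset (V × V)) (S : Finset V) (y : V × V → ℝ) :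
    ∑ v ∈ S, ∑ e ∈ E.filter (fun e => e.2 = v), y e
      = ∑ e ∈ E.filter (fun e => e.2 ∈ S), y e := by
  rw [← Finset.sum_fiberwise_of_maps_to (g := Prod.snd) (t := S)
      (fun e he => (Finset.mem_filter.mp he).2) y]
  refine Finset.sum_congr rfl fun v hv => ?_
  refine Finset.sum_congr ?_ fun _ _ => rfl
  rw [Finset.filter_filter]
  refine Finset.filter_congr fun e _ => ?_
  constructor
  · exact fun h => ⟨h ▸ hv, h⟩
  · exact fun h => h.2

lemma cut_value (E : Finset (V × V)) (y : V × V → ℝ) (s t : V) (S : Finset V)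
    (hs : s ∈ S) (ht : t ∉ S)
    (hcons : ∀ v, v ≠ s → v ≠ t →
      ∑ e ∈ E.filter (fun e => e.2 = v), y e = ∑ e ∈ E.filter (fun e => e.1 = v), y e) :
    flowValueFrom E y s = ∑ e ∈ cutArcs E S, y e - ∑ e ∈ backArcs E S, y e := by
  have h1 : ∑ v ∈ S, (∑ e ∈ E.filter (fun e => e.1 = v), y e
      - ∑ e ∈ E.filter (fun e => e.2 = v), y e) = flowValueFrom E y s := by
    rw [Finset.sum_eq_single_of_mem s hs]
    · rfl
    · intro v hv hvs
      have hvt : v ≠ t := fun h => ht (h ▸ hv)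
      rw [hcons v hvs hvt]; ring
  rw [← h1, Finset.sum_sub_distrib, sum_fiber_fst, sum_fiber_snd]
  have h2 : ∑ e ∈ E.filter (fun e => e.1 ∈ S), y e
      = ∑ e ∈ E.filter (fun e => e.1 ∈ S ∧ e.2 ∈ S), y e + ∑ e ∈ cutArcs E S, y e := by
    rw [← Finset.sum_filter_add_sum_filter_not (E.filter (fun e => e.1 ∈ S))
      (fun e => e.2 ∈ S) y, Finset.filter_filter, Finset.filter_filter]
    rfl
  have h3 : ∑ e ∈ E.filter (fun e => e.2 ∈ S), y e
      = ∑ e ∈ E.filter (fun e => e.1 ∈ S ∧ e.2 ∈ S), y e + ∑ e ∈ backArcs E S, y e := by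
    rw [← Finset.sum_filter_add_sum_filter_not (E.filter (fun e => e.2 ∈ S))
      (fun e => e.1 ∈ S) y, Finset.filter_filter, Finset.filter_filter]
    congr 1
    · refine Finset.sum_congr (Finset.filter_congr fun e _ => ?_) fun _ _ => rfl
      exact and_comm
    · refine Finset.sum_congr (Finset.filter_congr fun e _ => ?_) fun _ _ => rfl
      exact and_comm
  rw [h2, h3]
  ring

end IntegralityAux

/-- Integrality theorem: with integer capacities there is an integer-valued maximum flow,
and the maximum flow value is an integer. -/
theorem integrality_theorem [Fintype V] [DecidableEq V]
    (E : Finset (V × V)) (u : V × V → ℕ) (s t : V) (hst : s ≠ t) :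
    ∃ x : V × V → ℝ,
      IsFeasibleFlow E (fun e => (u e : ℝ)) x s t ∧
      (∀ e, ∃ n : ℕ, x e = n) ∧
      IsGreatest {v | ∃ y, IsFeasibleFlow E (fun e => (u e : ℝ)) y s t ∧
        flowValueFrom E y s = v} (flowValueFrom E x s) ∧
      ∃ k : ℕ, flowValueFrom E x s = k := by
  classical
  -- integer feasibility
  set IF : (V × V → ℤ) → Prop := fun x =>
    (∀ e ∈ E, 0 ≤ x e ∧ x e ≤ (u e : ℤ)) ∧ (∀ e, e ∉ E → x e = 0) ∧
    (∀ v, v ≠ s → v ≠ t → netout E x v = 0) with hIFdef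
  have h0 : IF (fun _ => 0) :=
    ⟨fun e _ => by simp, fun _ _ => rfl, fun v _ _ => by simp [netout]⟩
  have hbdd : ∃ b : ℤ, ∀ z : ℤ, (∃ x, IF x ∧ netout E x s = z) → z ≤ b := by
    refine ⟨∑ e ∈ E, (u e : ℤ), ?_⟩
    rintro z ⟨x, hx, rfl⟩
    have h1 : ∑ e ∈ E.filter (fun e => e.1 = s), x e ≤ ∑ e ∈ E, (u e : ℤ) :=
      calc ∑ e ∈ E.filter (fun e => e.1 = s), x e
          ≤ ∑ e ∈ E.filter (fun e => e.1 = s), (u e : ℤ) :=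
            Finset.sum_le_sum fun e he => (hx.1 e (Finset.mem_filter.mp he).1).2
        _ ≤ ∑ e ∈ E, (u e : ℤ) := Finset.sum_le_sum_of_subset_of_nonneg
            (Finset.filter_subset _ _) (fun e _ _ => by positivity)
    have h2 : 0 ≤ ∑ e ∈ E.filter (fun e => e.2 = s), x e :=
      Finset.sum_nonneg fun e he => (hx.1 e (Finset.mem_filter.mp he).1).1
    unfold netout
    omega
  obtain ⟨k, ⟨x0, hx0, hx0k⟩, hkmax⟩ :=
    Int.exists_greatest_of_bdd hbdd ⟨0, fun _ => (0 : ℤ), h0, by simp [netout]⟩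
  have hk0 : (0 : ℤ) ≤ k := hkmax 0 ⟨fun _ => 0, h0, by simp [netout]⟩
  -- no augmenting path
  have hnoreach : ¬ Relation.ReflTransGen (Res E u x0) s t := by
    intro hreach
    obtain ⟨l, hchain, hlast⟩ := List.exists_isChain_cons_of_relationReflTransGen hreach
    obtain ⟨x', hcap', hsupp', hnet'⟩ :=
      augment E u t l.length l s x0 le_rfl hchain hlast hx0.1
    have hIF' : IF x' := ⟨hcap', fun e he => by rw [hsupp' e he]; exact hx0.2.1 e he,
      fun v hvs hvt => by rw [hnet' v, hx0.2.2 v hvs hvt, if_neg hvs, if_neg hvt]; ring⟩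
    have hv' : netout E x' s = k + 1 := by
      rw [hnet' s, hx0k, if_pos rfl, if_neg hst]; ring
    have := hkmax (k + 1) ⟨x', hIF', hv'⟩
    omega
  set S : Finset V := Finset.univ.filter (fun v => Relation.ReflTransGen (Res E u x0) s v)
    with hS
  have hsS : s ∈ S := by
    simp only [hS, Finset.mem_filter, Finset.mem_univ, true_and]
    exact Relation.ReflTransGen.refl
  have htS : t ∉ S := by simpa [hS] using hnoreach
  have hsat : ∀ e ∈ cutArcs E S, x0 e = (u e : ℤ) := by
    rintro ⟨p, q⟩ he
    rw [cutArcs, Finset.mem_filter] at he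
    obtain ⟨heE, hp, hq⟩ := he
    simp only [hS, Finset.mem_filter, Finset.mem_univ, true_and] at hp hq
    by_contra hne
    have hlt : x0 (p, q) < (u (p, q) : ℤ) := lt_of_le_of_ne ((hx0.1 _ heE).2) hne
    exact hq (hp.tail (Or.inl ⟨heE, hlt⟩))
  have hzero : ∀ e ∈ backArcs E S, x0 e = 0 := by
    rintro ⟨p, q⟩ he
    rw [backArcs, Finset.mem_filter] at he
    obtain ⟨heE, hp, hq⟩ := he
    simp only [hS, Finset.mem_filter, Finset.mem_univ, true_and] at hp hq
    by_contra hne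
    have hpos : 0 < x0 (p, q) := lt_of_le_of_ne ((hx0.1 _ heE).1) (Ne.symm hne)
    exact hp (hq.tail (Or.inr ⟨heE, hpos⟩))
  -- the real-valued flow
  set xr : V × V → ℝ := fun e => ((x0 e : ℤ) : ℝ) with hxr
  have hfeas : IsFeasibleFlow E (fun e => (u e : ℝ)) xr s t := by
    refine ⟨fun e he => ?_, fun e he => ?_, fun v hvs hvt => ?_⟩
    · obtain ⟨h1, h2⟩ := hx0.1 e he
      constructor
      · show (0 : ℝ) ≤ ((x0 e : ℤ) : ℝ)
        exact_mod_cast h1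
      · show ((x0 e : ℤ) : ℝ) ≤ ((u e : ℕ) : ℝ)
        exact_mod_cast h2
    · simp [hxr, hx0.2.1 e he]
    · have h := hx0.2.2 v hvs hvt
      unfold netout at h
      have h' : ∑ e ∈ E.filter (fun e => e.2 = v), x0 e
          = ∑ e ∈ E.filter (fun e => e.1 = v), x0 e := by omega
      have := congrArg (fun z : ℤ => (z : ℝ)) h'
      push_cast at this
      simpa [hxr] using this
  have hval : flowValueFrom E xr s = (k : ℝ) := by
    rw [← hx0k]
    unfold flowValueFrom netout
    push_cast
    rfl
  have hcut : flowValueFrom E xr s = cutCapacity E (fun e => (u e : ℝ)) S := by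
    rw [cut_value E xr s t S hsS htS hfeas.2.2]
    have hb : ∑ e ∈ backArcs E S, xr e = 0 :=
      Finset.sum_eq_zero fun e he => by simp [hxr, hzero e he]
    rw [hb, sub_zero]
    unfold cutCapacity
    refine Finset.sum_congr rfl fun e he => ?_
    simp [hxr, hsat e he]
  have hub : ∀ y : V × V → ℝ, IsFeasibleFlow E (fun e => (u e : ℝ)) y s t →
      flowValueFrom E y s ≤ cutCapacity E (fun e => (u e : ℝ)) S := by
    intro y hy
    rw [cut_value E y s t S hsS htS hy.2.2]
    have hb : 0 ≤ ∑ e ∈ backArcs E S, y e := by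
      refine Finset.sum_nonneg fun e he => ?_
      simp only [backArcs, Finset.mem_filter] at he
      exact (hy.1 e he.1).1
    have hc : ∑ e ∈ cutArcs E S, y e ≤ ∑ e ∈ cutArcs E S, (u e : ℝ) := by
      refine Finset.sum_le_sum fun e he => ?_
      simp only [cutArcs, Finset.mem_filter] at he
      exact (hy.1 e he.1).2
    unfold cutCapacity
    linarith
  refine ⟨xr, hfeas, ?_, ⟨⟨xr, hfeas, rfl⟩, ?_⟩, ?_⟩
  · intro e
    have hnn : 0 ≤ x0 e := by
      by_cases he : e ∈ E
      · exact (hx0.1 e he).1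
      · rw [hx0.2.1 e he]
    refine ⟨(x0 e).toNat, ?_⟩
    simp only [hxr]
    exact_mod_cast (Int.toNat_of_nonneg hnn).symm
  · rintro v ⟨y, hy, rfl⟩
    calc flowValueFrom E y s ≤ cutCapacity E (fun e => (u e : ℝ)) S := hub y hy
      _ = flowValueFrom E xr s := hcut.symm
  · refine ⟨k.toNat, ?_⟩
    rw [hval]
    exact_mod_cast (Int.toNat_of_nonneg hk0).symm
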